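/- For all n ≥ 2, the number of nonnesting permutations of the multiset {1,1,2,2,…,n,n} that avoid both patterns 123 and 231 equals (n² + 5n − 6)/2. -/

import Mathlib

/-- `w` is a permutation of the multiset `{1,1,2,2,…,n,n}`:
a word in which every value in `{1,…,n}` occurs exactly twice
and no other value occurs. -/
def IsMultisetPerm (n : ℕ) (w : List ℕ) : Prop :=
  ∀ i : ℕ, w.count i = if 1 ≤ i ∧ i ≤ n then 2 else 0

/-- `t` is order-isomorphic to the word `σ`:
same length, and entries compare (both `<` and `=`) in the same way. -/
def OrderIsoWord (t σ : List ℕ) : Prop :=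
  t.length = σ.length ∧
  ∀ r s : ℕ, r < σ.length → s < σ.length →
    ((t.getD r 0 < t.getD s 0 ↔ σ.getD r 0 < σ.getD s 0) ∧
     (t.getD r 0 = t.getD s 0 ↔ σ.getD r 0 = σ.getD s 0))

/-- `w` contains the pattern `σ`: some subsequence of `w`
is order-isomorphic to `σ`. -/
def Contains (w σ : List ℕ) : Prop :=
  ∃ t : List ℕ, t.Sublist w ∧ OrderIsoWord t σ

/-- `w` avoids the pattern `σ`. -/
def Avoids (w σ : List ℕ) : Prop := ¬ Contains w σ

/-- `w` is a nonnesting permutation of `{1,1,2,2,…,n,n}`: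
it avoids the patterns `1221` and `2112`. -/
def IsNonnesting (n : ℕ) (w : List ℕ) : Prop :=
  IsMultisetPerm n w ∧ Avoids w [1,2,2,1] ∧ Avoids w [2,1,1,2]

/-!
Call a word admissible if it avoids `1221`, `2112`, `123` and `231`. Write an admissible
permutation of `{1,1,…,n,n}` as `A n B n C`. Deleting both copies of `n` leaves an admissible
permutation of `{1,1,…,n-1,n-1}`, and the occurrences through `n` are excluded exactly by a few
order conditions on `A`, `B`, `C` (`MaxInsertable`). Unless `A = B = []`, these conditions force
the word to be one of `n + 2` explicit words (for `n ≥ 3`): the `n - 1` words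
`a a ⋯ 1 1 n n ⋯ (a+1) (a+1)`, and `1 n 1 n ⋯`, `n 1 n 1 ⋯`, `n 1 n (n-1) 1 (n-1) ⋯`, each
completed by the remaining letters in decreasing order. Hence `f n = f (n - 1) + n + 2`, and
`f 2 = 4`.
-/

open List

section Patterns

theorem orderIsoWord_iff_forall_mem_range {t σ : List ℕ} :
    OrderIsoWord t σ ↔ t.length = σ.length ∧
      ∀ r s, r ∈ range σ.length → s ∈ range σ.length →
        ((t.getD r 0 < t.getD s 0 ↔ σ.getD r 0 < σ.getD s 0) ∧
         (t.getD r 0 = t.getD s 0 ↔ σ.getD r 0 = σ.getD s 0)) := by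
  simp only [OrderIsoWord, mem_range]

theorem orderIsoWord_123 {x y z : ℕ} : OrderIsoWord [x, y, z] [1, 2, 3] ↔ x < y ∧ y < z := by
  simp [orderIsoWord_iff_forall_mem_range, range_succ, or_imp, forall_and]
  omega

theorem orderIsoWord_231 {x y z : ℕ} : OrderIsoWord [y, z, x] [2, 3, 1] ↔ x < y ∧ y < z := by
  simp [orderIsoWord_iff_forall_mem_range, range_succ, or_imp, forall_and]
  omega

theorem orderIsoWord_1221 {x y z u : ℕ} :
    OrderIsoWord [x, y, z, u] [1, 2, 2, 1] ↔ x < y ∧ z = y ∧ u = x := by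
  simp [orderIsoWord_iff_forall_mem_range, range_succ, or_imp, forall_and]
  omega

theorem orderIsoWord_2112 {x y z u : ℕ} :
    OrderIsoWord [y, x, z, u] [2, 1, 1, 2] ↔ x < y ∧ z = x ∧ u = y := by
  simp [orderIsoWord_iff_forall_mem_range, range_succ, or_imp, forall_and]
  omega

variable {w : List ℕ}

theorem contains_iff_of_length_eq_three {σ : List ℕ} (hσ : σ.length = 3) :
    Contains w σ ↔ ∃ x y z, [x, y, z] <+ w ∧ OrderIsoWord [x, y, z] σ := by
  refine ⟨fun ⟨t, hsub, hiso⟩ => ?_, fun ⟨_, _, _, h⟩ => ⟨_, h⟩⟩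
  obtain ⟨x, y, z, rfl⟩ := length_eq_three.mp (hiso.1.trans hσ)
  exact ⟨x, y, z, hsub, hiso⟩

theorem contains_iff_of_length_eq_four {σ : List ℕ} (hσ : σ.length = 4) :
    Contains w σ ↔ ∃ x y z u, [x, y, z, u] <+ w ∧ OrderIsoWord [x, y, z, u] σ := by
  refine ⟨fun ⟨t, hsub, hiso⟩ => ?_, fun ⟨_, _, _, _, h⟩ => ⟨_, h⟩⟩
  obtain ⟨x, y, z, u, rfl⟩ := length_eq_four.mp (hiso.1.trans hσ)
  exact ⟨x, y, z, u, hsub, hiso⟩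

theorem contains_123_iff : Contains w [1, 2, 3] ↔ ∃ x y z, [x, y, z] <+ w ∧ x < y ∧ y < z := by
  rw [contains_iff_of_length_eq_three rfl]
  simp only [orderIsoWord_123]

theorem contains_231_iff : Contains w [2, 3, 1] ↔ ∃ x y z, [y, z, x] <+ w ∧ x < y ∧ y < z := by
  rw [contains_iff_of_length_eq_three rfl]
  exact ⟨fun ⟨y, z, x, h, hiso⟩ => ⟨x, y, z, h, orderIsoWord_231.mp hiso⟩,
    fun ⟨x, y, z, h, hiso⟩ => ⟨y, z, x, h, orderIsoWord_231.mpr hiso⟩⟩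

theorem contains_1221_iff : Contains w [1, 2, 2, 1] ↔ ∃ x y, [x, y, y, x] <+ w ∧ x < y := by
  rw [contains_iff_of_length_eq_four rfl]
  simp [orderIsoWord_1221]

theorem contains_2112_iff : Contains w [2, 1, 1, 2] ↔ ∃ y x, [y, x, x, y] <+ w ∧ x < y := by
  rw [contains_iff_of_length_eq_four rfl]
  simp [orderIsoWord_2112]

end Patterns

section Sublists

variable {α : Type*} {a b : α} {l t P S : List α}

theorem sublist_append_of_sublist_append_cons (h : t <+ P ++ a :: S) (ht : a ∉ t) :
    t <+ P ++ S := by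
  obtain ⟨t₁, t₂, rfl, h₁, h₂⟩ := sublist_append_iff.mp h
  refine h₁.append ?_
  rcases sublist_cons_iff.mp h₂ with h₂ | ⟨r, rfl, -⟩
  · exact h₂
  · simp at ht

theorem sublist_of_cons_sublist_append_cons (ha : a ∉ P) (h : a :: l <+ P ++ a :: S) :
    l <+ S := by
  induction P with
  | nil => exact cons_sublist_cons.mp h
  | cons p P ih =>
    rcases sublist_cons_iff.mp h with h | ⟨r, hr, -⟩
    · exact ih (fun h' => ha (mem_cons_of_mem p h')) h
    · exact absurd (mem_cons.mpr (Or.inl (cons.inj hr).1)) ha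

theorem sublist_of_append_singleton_sublist_append_cons (ha : a ∉ S)
    (h : l ++ [a] <+ P ++ a :: S) : l <+ P := by
  rw [← reverse_sublist] at h ⊢
  simp only [reverse_append, reverse_cons, reverse_nil, nil_append, singleton_append,
    append_assoc] at h
  exact sublist_of_cons_sublist_append_cons (by simpa using ha) h

theorem mem_and_sublist_or_sublist_of_sublist_append_cons (ha : a ∉ P) (hb : b ≠ a)
    (h : b :: a :: l <+ P ++ a :: S) : (b ∈ P ∧ l <+ S) ∨ b :: a :: l <+ S := by
  induction P with
  | nil =>
    rcases sublist_cons_iff.mp h with h | ⟨r, hr, -⟩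
    · exact Or.inr h
    · exact absurd (cons.inj hr).1 hb
  | cons p P ih =>
    rcases sublist_cons_iff.mp h with h | ⟨r, hr, hsub⟩
    · rcases ih (fun h' => ha (mem_cons_of_mem p h')) h with ⟨hbP, hl⟩ | h
      · exact Or.inl ⟨mem_cons_of_mem p hbP, hl⟩
      · exact Or.inr h
    · obtain ⟨rfl, rfl⟩ := cons.inj hr
      exact Or.inl ⟨mem_cons_self, sublist_of_cons_sublist_append_cons
        (fun h' => ha (mem_cons_of_mem _ h')) hsub⟩

end Sublists

structure Admissible (w : List ℕ) : Prop where
  not_1221 : ∀ x y, x < y → ¬[x, y, y, x] <+ w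
  not_2112 : ∀ x y, x < y → ¬[y, x, x, y] <+ w
  not_123 : ∀ x y z, x < y → y < z → ¬[x, y, z] <+ w
  not_231 : ∀ x y z, x < y → y < z → ¬[y, z, x] <+ w

theorem Admissible.sublist {w w' : List ℕ} (h : Admissible w) (hw : w' <+ w) : Admissible w' :=
  ⟨fun x y hxy hs => h.not_1221 x y hxy (hs.trans hw),
   fun x y hxy hs => h.not_2112 x y hxy (hs.trans hw),
   fun x y z hxy hyz hs => h.not_123 x y z hxy hyz (hs.trans hw),
   fun x y z hxy hyz hs => h.not_231 x y z hxy hyz (hs.trans hw)⟩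

theorem admissible_of_pairwise_ge {w : List ℕ} (hw : w.Pairwise (· ≥ ·)) : Admissible w := by
  have noAscent : ∀ {x y : ℕ}, [x, y] <+ w → y ≤ x := pairwise_iff_forall_sublist.mp hw
  refine ⟨fun x y hxy hs => ?_, fun x y hxy hs => ?_, fun x y z hxy hyz hs => ?_,
    fun x y z hxy hyz hs => ?_⟩
  · exact absurd (noAscent ((by simp : [x, y] <+ [x, y, y, x]).trans hs)) (by omega)
  · exact absurd (noAscent ((by simp : [x, y] <+ [y, x, x, y]).trans hs)) (by omega)
  · exact absurd (noAscent ((by simp : [x, y] <+ [x, y, z]).trans hs)) (by omega)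
  · exact absurd (noAscent ((by simp : [y, z] <+ [y, z, x]).trans hs)) (by omega)

theorem Admissible.pairwise_ge_of_lt {P Q : List ℕ} (h : Admissible (P ++ Q)) {c : ℕ}
    (hc : c ∈ P) (hQ : ∀ y ∈ Q, c < y) : Q.Pairwise (· ≥ ·) := by
  refine pairwise_iff_forall_sublist.mpr fun {y z} hs => ?_
  by_contra! hyz
  exact h.not_123 c y z (hQ y (hs.subset (by simp))) hyz
    ((singleton_sublist.mpr hc).append hs)

theorem admissible_iff_avoids {w : List ℕ} :
    Admissible w ↔ Avoids w [1, 2, 2, 1] ∧ Avoids w [2, 1, 1, 2] ∧ Avoids w [1, 2, 3] ∧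
      Avoids w [2, 3, 1] := by
  simp only [Avoids, contains_1221_iff, contains_2112_iff, contains_123_iff, contains_231_iff,
    not_exists, not_and]
  constructor
  · rintro ⟨h₁, h₂, h₃, h₄⟩
    exact ⟨fun x y hs hxy => h₁ x y hxy hs, fun y x hs hxy => h₂ x y hxy hs,
      fun x y z hs hxy hyz => h₃ x y z hxy hyz hs, fun x y z hs hxy hyz => h₄ x y z hxy hyz hs⟩
  · rintro ⟨h₁, h₂, h₃, h₄⟩
    exact ⟨fun x y hxy hs => h₁ x y hs hxy, fun x y hxy hs => h₂ y x hs hxy,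
      fun x y z hxy hyz hs => h₃ x y z hs hxy hyz, fun x y z hxy hyz hs => h₄ x y z hs hxy hyz⟩

/-- The conditions for inserting a new largest letter `n` as `A n B n C`: they exclude the
occurrences `x y n`, `x n y`, `x n y`, `x n n x` and `n x x n` respectively. -/
structure MaxInsertable (A B C : List ℕ) : Prop where
  pairwise_ge : (A ++ B).Pairwise (· ≥ ·)
  le_of_mem_left : ∀ x ∈ A, ∀ y ∈ B ++ C, x ≤ y
  le_of_mem_middle : ∀ x ∈ B, ∀ y ∈ C, x ≤ y
  not_mem_right : ∀ x ∈ A, x ∉ C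
  nodup : B.Nodup

section InsertMax

variable {A B C : List ℕ} {n : ℕ}

theorem Admissible.maxInsertable (h : Admissible (A ++ n :: B ++ n :: C))
    (hA : ∀ x ∈ A, x < n) (hB : ∀ x ∈ B, x < n) : MaxInsertable A B C := by
  have hw : A ++ n :: B ++ n :: C = A ++ n :: (B ++ n :: C) := by simp
  refine ⟨pairwise_iff_forall_sublist.mpr fun {x y} hs => ?_, fun x hx y hy => ?_,
    fun x hx y hy => ?_, fun x hx hxC => ?_, nodup_iff_sublist.mpr fun x hs => ?_⟩
  · by_contra! hxy
    have hyn : y < n := (mem_append.mp (hs.subset (by simp))).elim (hA y) (hB y)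
    have hs' : [x, y] <+ A ++ n :: B := hs.trans ((Sublist.refl A).append (sublist_cons_self n B))
    exact h.not_123 x y n hxy hyn (hs'.append (singleton_sublist.mpr mem_cons_self))
  · by_contra! hyx
    rw [hw] at h
    refine h.not_231 y x n hyx (hA x hx)
      ((singleton_sublist.mpr hx).append (cons_sublist_cons.mpr ?_))
    exact singleton_sublist.mpr (mem_append.mpr ((mem_append.mp hy).imp id (mem_cons_of_mem n)))
  · by_contra! hyx
    exact h.not_231 y x n hyx (hB x hx)
      ((singleton_sublist.mpr (by simp [hx])).append (cons_sublist_cons.mpr (by simpa using hy)))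
  · rw [hw] at h
    refine h.not_1221 x n (hA x hx) ((singleton_sublist.mpr hx).append (cons_sublist_cons.mpr ?_))
    exact (cons_sublist_cons.mpr (singleton_sublist.mpr hxC)).trans (sublist_append_right B _)
  · rw [hw] at h
    have hxn : x < n := hB x (hs.subset (by simp))
    exact h.not_2112 x n hxn ((nil_sublist A).append
      (cons_sublist_cons.mpr (hs.append (singleton_sublist.mpr mem_cons_self))))

theorem MaxInsertable.not_123_at_max (h : MaxInsertable A B C) (hnC : n ∉ C) {x y : ℕ}
    (hxy : x < y) (hyn : y < n) : ¬[x, y, n] <+ A ++ n :: B ++ n :: C := fun hs => by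
  have hs := sublist_of_append_singleton_sublist_append_cons (l := [x, y]) hnC hs
  have hs := sublist_append_of_sublist_append_cons hs (by simp; omega)
  exact absurd (pairwise_iff_forall_sublist.mp h.pairwise_ge hs) (by omega)

theorem MaxInsertable.not_231_at_max (h : MaxInsertable A B C) (hnA : n ∉ A) (hnB : n ∉ B)
    (hnC : n ∉ C) {x y : ℕ} (hxy : x < y) (hyn : y < n) :
    ¬[y, n, x] <+ A ++ n :: B ++ n :: C := fun hs => by
  rw [append_assoc, cons_append] at hs
  rcases mem_and_sublist_or_sublist_of_sublist_append_cons hnA hyn.ne hs with ⟨hyA, hs⟩ | hs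
  · have hx : x ∈ B ++ C := by
      rcases mem_append.mp (hs.subset (mem_singleton_self x)) with hx | hx
      · exact mem_append_left C hx
      · exact mem_append_right B ((mem_cons.mp hx).resolve_left (by omega))
    exact absurd (h.le_of_mem_left y hyA x hx) (by omega)
  rcases mem_and_sublist_or_sublist_of_sublist_append_cons hnB hyn.ne hs with ⟨hyB, hs⟩ | hs
  · exact absurd (h.le_of_mem_middle y hyB x (hs.subset (by simp))) (by omega)
  · exact hnC (hs.subset (by simp))

theorem MaxInsertable.not_1221_at_max (h : MaxInsertable A B C) (hnA : n ∉ A) (hnB : n ∉ B)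
    (hnC : n ∉ C) {x : ℕ} (hxn : x < n) : ¬[x, n, n, x] <+ A ++ n :: B ++ n :: C := fun hs => by
  rw [append_assoc, cons_append] at hs
  rcases mem_and_sublist_or_sublist_of_sublist_append_cons hnA hxn.ne hs with ⟨hxA, hs⟩ | hs
  · exact h.not_mem_right x hxA
      (singleton_sublist.mp (sublist_of_cons_sublist_append_cons hnB hs))
  rcases mem_and_sublist_or_sublist_of_sublist_append_cons hnB hxn.ne hs with ⟨-, hs⟩ | hs
  all_goals exact hnC (hs.subset (by simp))

theorem MaxInsertable.not_2112_at_max (h : MaxInsertable A B C) (hnA : n ∉ A) (hnC : n ∉ C)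
    (x : ℕ) : ¬[n, x, x, n] <+ A ++ n :: B ++ n :: C := fun hs => by
  rw [append_assoc, cons_append] at hs
  exact nodup_iff_sublist.mp h.nodup x (sublist_of_append_singleton_sublist_append_cons
    (l := [x, x]) hnC (sublist_of_cons_sublist_append_cons hnA hs))

theorem admissible_insert_max (hA : ∀ x ∈ A, x < n) (hB : ∀ x ∈ B, x < n)
    (hC : ∀ x ∈ C, x < n) (hcore : Admissible (A ++ B ++ C)) (h : MaxInsertable A B C) :
    Admissible (A ++ n :: B ++ n :: C) := by
  have hnA : n ∉ A := fun h' => (hA n h').false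
  have hnB : n ∉ B := fun h' => (hB n h').false
  have hnC : n ∉ C := fun h' => (hC n h').false
  have hle : ∀ {t}, t <+ A ++ n :: B ++ n :: C → ∀ x ∈ t, x ≤ n := by
    intro t ht x hx
    have := ht.subset hx
    simp only [mem_append, mem_cons] at this
    rcases this with ((hx | rfl | hx) | rfl | hx)
    exacts [(hA x hx).le, le_rfl, (hB x hx).le, le_rfl, (hC x hx).le]
  have toCore : ∀ {t}, t <+ A ++ n :: B ++ n :: C → n ∉ t → t <+ A ++ B ++ C := by
    intro t ht hnt
    have ht' := sublist_append_of_sublist_append_cons ht hnt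
    rw [append_assoc, cons_append] at ht'
    simpa using sublist_append_of_sublist_append_cons ht' hnt
  refine ⟨fun x y hxy hs => ?_, fun x y hxy hs => ?_, fun x y z hxy hyz hs => ?_,
    fun x y z hxy hyz hs => ?_⟩
  · rcases (hle hs y (by simp)).lt_or_eq with hy | rfl
    · exact hcore.not_1221 x y hxy (toCore hs (by simp; omega))
    · exact h.not_1221_at_max hnA hnB hnC hxy hs
  · rcases (hle hs y (by simp)).lt_or_eq with hy | rfl
    · exact hcore.not_2112 x y hxy (toCore hs (by simp; omega))
    · exact h.not_2112_at_max hnA hnC x hs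
  · rcases (hle hs z (by simp)).lt_or_eq with hz | rfl
    · exact hcore.not_123 x y z hxy hyz (toCore hs (by simp; omega))
    · exact h.not_123_at_max hnC hxy hyz hs
  · rcases (hle hs z (by simp)).lt_or_eq with hz | rfl
    · exact hcore.not_231 x y z hxy hyz (toCore hs (by simp; omega))
    · exact h.not_231_at_max hnA hnB hnC hxy hyz hs

theorem admissible_insert_max_iff (hA : ∀ x ∈ A, x < n) (hB : ∀ x ∈ B, x < n)
    (hC : ∀ x ∈ C, x < n) :
    Admissible (A ++ n :: B ++ n :: C) ↔ Admissible (A ++ B ++ C) ∧ MaxInsertable A B C :=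
  ⟨fun h => ⟨h.sublist (by simp), h.maxInsertable hA hB⟩,
    fun h => admissible_insert_max hA hB hC h.1 h.2⟩

end InsertMax

/-- `descPairs b k` is the word `(b+k-1) (b+k-1) ⋯ (b+1) (b+1) b b`. -/
def descPairs (b : ℕ) : ℕ → List ℕ
  | 0 => []
  | k + 1 => (b + k) :: (b + k) :: descPairs b k

section DescPairs

variable {b k i : ℕ}

@[simp] theorem descPairs_zero : descPairs b 0 = [] := rfl

theorem descPairs_succ : descPairs b (k + 1) = (b + k) :: (b + k) :: descPairs b k := rfl

@[simp] theorem mem_descPairs : i ∈ descPairs b k ↔ b ≤ i ∧ i < b + k := by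
  induction k with
  | zero => simp
  | succ k ih => simp only [descPairs_succ, mem_cons, ih]; omega

theorem count_descPairs : (descPairs b k).count i = if b ≤ i ∧ i < b + k then 2 else 0 := by
  induction k with
  | zero => simp
  | succ k ih =>
    simp only [descPairs_succ, count_cons, ih, beq_iff_eq]
    split_ifs <;> omega

theorem pairwise_ge_descPairs : (descPairs b k).Pairwise (· ≥ ·) := by
  induction k with
  | zero => simp
  | succ k ih =>
    simp only [descPairs_succ, pairwise_cons, mem_cons, mem_descPairs]
    exact ⟨fun x hx => by omega, fun x hx => by omega, ih⟩

theorem eq_descPairs_of_pairwise_ge {l : List ℕ} (hl : l.Pairwise (· ≥ ·))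
    (hc : ∀ i, l.count i = if b ≤ i ∧ i < b + k then 2 else 0) : l = descPairs b k :=
  Perm.eq_of_pairwise (fun _ _ _ _ h₁ h₂ => le_antisymm h₂ h₁) hl pairwise_ge_descPairs
    (perm_iff_count.mpr fun i => by rw [hc, count_descPairs])

theorem eq_nil_or_eq_singleton_of_descPairs_eq_append {X Y : List ℕ}
    (h : descPairs b k = X ++ Y) (hX : X.Nodup) :
    X = [] ∨ ∃ k', k = k' + 1 ∧ X = [b + k'] ∧ Y = (b + k') :: descPairs b k' := by
  cases k with
  | zero => simp_all
  | succ k =>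
    rcases X with _ | ⟨x, _ | ⟨y, X⟩⟩
    · exact Or.inl rfl
    · simp only [descPairs_succ, cons_append, nil_append, cons.injEq] at h
      exact Or.inr ⟨k, rfl, by rw [h.1], h.2.symm⟩
    · simp only [descPairs_succ, cons_append, cons.injEq] at h
      simp [← h.1, ← h.2.1] at hX

end DescPairs

section MultisetPerm

variable {n : ℕ} {w A B C : List ℕ}

theorem IsMultisetPerm.mem_iff (h : IsMultisetPerm n w) {x : ℕ} : x ∈ w ↔ 1 ≤ x ∧ x ≤ n := by
  rw [← count_pos_iff, h x]
  split_ifs <;> omega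

theorem isMultisetPerm_descPairs : IsMultisetPerm n (descPairs 1 n) := fun i => by
  rw [count_descPairs]
  split_ifs <;> omega

theorem isMultisetPerm_insert_max_iff (hA : n + 1 ∉ A) (hB : n + 1 ∉ B) (hC : n + 1 ∉ C) :
    IsMultisetPerm (n + 1) (A ++ (n + 1) :: B ++ (n + 1) :: C) ↔
      IsMultisetPerm n (A ++ B ++ C) := by
  refine forall_congr' fun i => ?_
  by_cases hi : i = n + 1
  · subst hi
    simp [count_eq_zero.mpr, hA, hB, hC]
  · simp only [count_append, count_cons, beq_iff_eq]
    split_ifs <;> omega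

end MultisetPerm

def admissibleWords (n : ℕ) : Set (List ℕ) := {w | IsMultisetPerm n w ∧ Admissible w}

section Membership

variable {n : ℕ} {w A B C : List ℕ}

theorem insert_max_mem_admissibleWords_iff (hA : n + 1 ∉ A) (hB : n + 1 ∉ B)
    (hC : n + 1 ∉ C) :
    A ++ (n + 1) :: B ++ (n + 1) :: C ∈ admissibleWords (n + 1) ↔
      A ++ B ++ C ∈ admissibleWords n ∧ MaxInsertable A B C := by
  simp only [admissibleWords, Set.mem_ofPred_eq, isMultisetPerm_insert_max_iff hA hB hC, and_assoc]
  refine and_congr_right fun hp => ?_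
  have hlt : ∀ x ∈ A ++ B ++ C, x < n + 1 := fun x hx => Nat.lt_succ_of_le (hp.mem_iff.mp hx).2
  exact admissible_insert_max_iff (fun x hx => hlt x (by simp [hx]))
    (fun x hx => hlt x (by simp [hx])) (fun x hx => hlt x (by simp [hx]))

theorem maxInsertable_nil_middle (hA : A.Pairwise (· ≥ ·)) (hAC : ∀ x ∈ A, ∀ y ∈ C, x < y) :
    MaxInsertable A [] C :=
  ⟨by simpa using hA, fun x hx y hy => (hAC x hx y (by simpa using hy)).le, by simp,
    fun x hx hxC => (hAC x hx x hxC).false, nodup_nil⟩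

theorem descPairs_mem_admissibleWords : descPairs 1 n ∈ admissibleWords n :=
  ⟨isMultisetPerm_descPairs, admissible_of_pairwise_ge pairwise_ge_descPairs⟩

theorem cons_cons_mem_admissibleWords (hw : w ∈ admissibleWords n) :
    (n + 1) :: (n + 1) :: w ∈ admissibleWords (n + 1) := by
  have hC : n + 1 ∉ w := fun h => by have := hw.1.mem_iff.mp h; omega
  simpa using (insert_max_mem_admissibleWords_iff (A := []) (B := []) (by simp) (by simp) hC).mpr
    ⟨by simpa using hw, maxInsertable_nil_middle (by simp) (by simp)⟩

end Membership

def twoRuns (n a : ℕ) : List ℕ := descPairs 1 a ++ descPairs (a + 1) (n - a)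

def wordU (n : ℕ) : List ℕ := 1 :: n :: 1 :: n :: descPairs 2 (n - 2)

def wordV (n : ℕ) : List ℕ := n :: 1 :: n :: 1 :: descPairs 2 (n - 2)

def wordW (n : ℕ) : List ℕ := n :: 1 :: n :: (n - 1) :: 1 :: (n - 1) :: descPairs 2 (n - 3)

section Words

variable {n a : ℕ}

-- Stated in the shape `A ++ m :: B ++ m :: C` of `insert_max_mem_admissibleWords_iff`.
theorem twoRuns_succ (ha : a ≤ n) :
    twoRuns (n + 1) a = descPairs 1 a ++ (n + 1) :: [] ++ (n + 1) :: descPairs (a + 1) (n - a) := by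
  rw [twoRuns, show n + 1 - a = n - a + 1 by omega, descPairs_succ,
    show a + 1 + (n - a) = n + 1 by omega]
  simp

theorem twoRuns_eq_cons (ha : 1 ≤ a) :
    twoRuns n a = a :: a :: (descPairs 1 (a - 1) ++ descPairs (a + 1) (n - a)) := by
  obtain ⟨a, rfl⟩ := Nat.exists_eq_add_of_le' ha
  simp [twoRuns, descPairs_succ, add_comm]

theorem twoRuns_mem_admissibleWords (ha : a ≤ n) : twoRuns n a ∈ admissibleWords n := by
  induction n, ha using Nat.le_induction with
  | base => simpa [twoRuns] using descPairs_mem_admissibleWords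
  | succ n ha ih =>
    rw [twoRuns_succ ha,
      insert_max_mem_admissibleWords_iff (by simp; omega) (by simp) (by simp; omega)]
    refine ⟨by simpa [twoRuns] using ih, maxInsertable_nil_middle pairwise_ge_descPairs ?_⟩
    simp only [mem_descPairs]
    omega

theorem wordU_mem_admissibleWords (hn : 1 ≤ n) : wordU (n + 1) ∈ admissibleWords (n + 1) := by
  have h := twoRuns_mem_admissibleWords hn
  rw [show wordU (n + 1) = [1] ++ (n + 1) :: [1] ++ (n + 1) :: descPairs 2 (n - 1) by
      simp [wordU],
    insert_max_mem_admissibleWords_iff (by simp; omega) (by simp; omega) (by simp; omega)]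
  refine ⟨by simpa [twoRuns, descPairs] using h, by simp [pairwise_cons], ?_, ?_, ?_, by simp⟩
    <;> simp <;> omega

theorem wordV_mem_admissibleWords (hn : 1 ≤ n) : wordV (n + 1) ∈ admissibleWords (n + 1) := by
  have h := twoRuns_mem_admissibleWords hn
  rw [show wordV (n + 1) = [] ++ (n + 1) :: [1] ++ (n + 1) :: 1 :: descPairs 2 (n - 1) by
      simp [wordV],
    insert_max_mem_admissibleWords_iff (by simp) (by simp; omega) (by simp; omega)]
  refine ⟨by simpa [twoRuns, descPairs] using h, by simp, by simp, ?_, by simp, by simp⟩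
  simp
  omega

theorem wordW_mem_admissibleWords (hn : 2 ≤ n) : wordW (n + 1) ∈ admissibleWords (n + 1) := by
  obtain ⟨m, rfl⟩ := Nat.exists_eq_add_of_le' (show 1 ≤ n by omega)
  have h := wordU_mem_admissibleWords (show 1 ≤ m by omega)
  rw [show wordW (m + 1 + 1) =
        [] ++ (m + 1 + 1) :: [1] ++ (m + 1 + 1) :: (m + 1) :: 1 :: (m + 1) :: descPairs 2 (m - 1) by
      simp [wordW],
    insert_max_mem_admissibleWords_iff (by simp) (by simp) (by simp; omega)]
  refine ⟨by simpa [wordU] using h, by simp, by simp, ?_, by simp, by simp⟩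
  simp
  omega

end Words

section Decompose

variable {α : Type*} [BEq α] [LawfulBEq α] {l : List α} {c : α}

theorem exists_eq_append_cons_of_count_eq_one (h : l.count c = 1) :
    ∃ s t, l = s ++ c :: t ∧ c ∉ s ∧ c ∉ t := by
  obtain ⟨s, t, rfl⟩ := append_of_mem (count_pos_iff.mp (show 0 < l.count c by omega))
  simp only [count_append, count_cons_self] at h
  exact ⟨s, t, rfl, count_eq_zero.mp (by omega), count_eq_zero.mp (by omega)⟩

theorem exists_eq_append_cons_append_cons_of_count_eq_two (h : l.count c = 2) :
    ∃ A B C, l = A ++ c :: B ++ c :: C ∧ c ∉ A ∧ c ∉ B ∧ c ∉ C := by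
  obtain ⟨s, t, rfl⟩ := append_of_mem (count_pos_iff.mp (show 0 < l.count c by omega))
  simp only [count_append, count_cons_self] at h
  by_cases hs : c ∈ s
  · obtain ⟨A, B, rfl, hA, hB⟩ := exists_eq_append_cons_of_count_eq_one (l := s) (c := c) (by
      have := count_pos_iff.mpr hs; omega)
    exact ⟨A, B, t, by simp, hA, hB, count_eq_zero.mp (by simp [count_append] at h; omega)⟩
  · obtain ⟨B, C, rfl, hB, hC⟩ := exists_eq_append_cons_of_count_eq_one (l := t) (c := c) (by
      rw [count_eq_zero.mpr hs] at h; omega)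
    exact ⟨s, B, C, by simp, hs, hB, hC⟩

theorem eq_singleton_of_count_eq_one (hl : ∀ x ∈ l, x = c) (h : l.count c = 1) : l = [c] := by
  rw [eq_replicate_of_mem hl] at h ⊢
  simp_all

end Decompose

section Classification

variable {n : ℕ} {w A B C : List ℕ}

theorem MaxInsertable.one_mem_left (h : MaxInsertable A B C)
    (hp : IsMultisetPerm n (A ++ B ++ C)) (hA : A ≠ []) : 1 ∈ A := by
  obtain ⟨a, ha⟩ := exists_mem_of_ne_nil A hA
  have han := (hp.mem_iff (x := a)).mp (mem_append_left _ (mem_append_left _ ha))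
  by_contra h1
  have h1' : 1 ∈ B ++ C := by simpa [h1] using hp.mem_iff.mpr ⟨le_rfl, by omega⟩
  have := h.le_of_mem_left a ha 1 h1'
  exact h1 (by rwa [show a = 1 by omega] at ha)

theorem MaxInsertable.eq_descPairs_of_nil_middle (h : MaxInsertable A [] C)
    (hp : IsMultisetPerm n (A ++ C)) (ha : Admissible (A ++ C)) (hA : A ≠ []) :
    ∃ a, 1 ≤ a ∧ a ≤ n ∧ A = descPairs 1 a ∧ C = descPairs (a + 1) (n - a) := by
  have hmem : ∀ x, x ∈ A ++ C ↔ 1 ≤ x ∧ x ≤ n := fun x => hp.mem_iff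
  have h1A := h.one_mem_left (by simpa using hp) hA
  have hC : ∀ y ∈ C, 1 < y := fun y hy => by
    have := (hmem y).mp (mem_append_right A hy)
    have : y ≠ 1 := by rintro rfl; exact h.not_mem_right 1 h1A hy
    omega
  have hAdec : A.Pairwise (· ≥ ·) := by simpa using h.pairwise_ge
  obtain ⟨a, A, rfl⟩ := exists_cons_of_ne_nil hA
  have hmax : ∀ x ∈ a :: A, x ≤ a := by simpa [pairwise_cons] using (pairwise_cons.mp hAdec).1
  have ha₁n := (hmem a).mp (by simp)
  have hAiff : ∀ i, i ∈ a :: A ↔ 1 ≤ i ∧ i ≤ a := fun i => by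
    refine ⟨fun hi => ⟨((hmem i).mp (mem_append_left C hi)).1, hmax i hi⟩, fun hi => ?_⟩
    rcases mem_append.mp ((hmem i).mpr ⟨hi.1, by omega⟩) with hi' | hi'
    · exact hi'
    · have := h.le_of_mem_left a mem_cons_self i (by simpa using hi')
      rw [show i = a by omega]
      exact mem_cons_self
  have hCiff : ∀ i, i ∈ C ↔ a < i ∧ i ≤ n := fun i => by
    refine ⟨fun hi => ⟨?_, ((hmem i).mp (mem_append_right _ hi)).2⟩, fun hi => ?_⟩
    · have := h.le_of_mem_left a mem_cons_self i (by simpa using hi)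
      have : i ≠ a := by rintro rfl; exact h.not_mem_right i mem_cons_self hi
      omega
    · refine (mem_append.mp ((hmem i).mpr ⟨by omega, hi.2⟩)).resolve_left fun hiA => ?_
      have := (hAiff i).mp hiA
      omega
  refine ⟨a, ha₁n.1, ha₁n.2, eq_descPairs_of_pairwise_ge hAdec fun i => ?_,
    eq_descPairs_of_pairwise_ge (ha.pairwise_ge_of_lt h1A hC) fun i => ?_⟩
  all_goals
    have hi := hp i
    have hA₀ := (count_eq_zero (a := i) (l := a :: A)).not
    have hC₀ := (count_eq_zero (a := i) (l := C)).not
    rw [not_not, hAiff] at hA₀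
    rw [not_not, hCiff] at hC₀
    rw [count_append] at hi
    split_ifs at hi ⊢ <;> omega

theorem MaxInsertable.eq_of_ne_nil_of_ne_nil (h : MaxInsertable A B C)
    (hp : IsMultisetPerm n (A ++ B ++ C)) (ha : Admissible (A ++ B ++ C)) (hA : A ≠ [])
    (hB : B ≠ []) : A = [1] ∧ B = [1] ∧ C = descPairs 2 (n - 1) := by
  have hmem : ∀ x, x ∈ A ++ B ++ C ↔ 1 ≤ x ∧ x ≤ n := fun x => hp.mem_iff
  have h1A := h.one_mem_left hp hA
  have h1C : 1 ∉ C := h.not_mem_right 1 h1A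
  have hB1 : ∀ y ∈ B, y = 1 := fun y hy => by
    have := (pairwise_append.mp h.pairwise_ge).2.2 1 h1A y hy
    have := (hmem y).mp (mem_append_left _ (mem_append_right _ hy))
    omega
  obtain ⟨z, hz⟩ := exists_mem_of_ne_nil B hB
  have hB1 : B = [1] := eq_singleton_of_count_eq_one hB1
    (count_eq_one_of_mem h.nodup (by rwa [← hB1 z hz]))
  subst hB1
  have hA1 : A = [1] := by
    refine eq_singleton_of_count_eq_one (fun x hx => ?_) ?_
    · have := h.le_of_mem_left x hx 1 (by simp)
      have := (hmem x).mp (by simp [hx])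
      omega
    · have := hp 1
      rw [count_append, count_append, count_eq_zero.mpr h1C, count_singleton_self,
        if_pos ⟨le_rfl, by have := (hmem 1).mp (by simp); omega⟩] at this
      omega
  subst hA1
  have hC : ∀ y ∈ C, 1 < y := fun y hy => by
    have := (hmem y).mp (by simp [hy])
    have : y ≠ 1 := by rintro rfl; exact h1C hy
    omega
  refine ⟨rfl, rfl, eq_descPairs_of_pairwise_ge (ha.pairwise_ge_of_lt (c := 1) (by simp) hC)
    fun i => ?_⟩
  have hi := hp i
  by_cases hi1 : i = 1
  · subst hi1
    rw [count_eq_zero.mpr h1C]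
    simp
  · simp only [count_append, count_singleton, beq_iff_eq] at hi
    split_ifs at hi ⊢ <;> omega

theorem MaxInsertable.eq_of_nil_left (h : MaxInsertable [] B C) (hp : IsMultisetPerm n (B ++ C))
    (ha : Admissible (B ++ C)) (hB : B ≠ []) :
    B = [1] ∧ (C = 1 :: descPairs 2 (n - 1) ∨ 2 ≤ n ∧ C = n :: 1 :: n :: descPairs 2 (n - 2)) := by
  have hmem : ∀ x, x ∈ B ++ C ↔ 1 ≤ x ∧ x ≤ n := fun x => hp.mem_iff
  obtain ⟨b, hb⟩ := exists_mem_of_ne_nil B hB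
  have hbn := (hmem b).mp (by simp [hb])
  have h1B : 1 ∈ B := by
    by_contra h1
    have h1' : 1 ∈ C := by simpa [h1] using (hmem 1).mpr ⟨le_rfl, by omega⟩
    have := h.le_of_mem_middle b hb 1 h1'
    exact h1 (by rwa [show b = 1 by omega] at hb)
  have hcount1 := hp 1
  rw [count_append, count_eq_one_of_mem h.nodup h1B, if_pos ⟨le_rfl, by omega⟩] at hcount1
  have hB1 : B = [1] := by
    refine eq_singleton_of_count_eq_one (fun x hx => ?_) (count_eq_one_of_mem h.nodup h1B)
    have := h.le_of_mem_middle x hx 1 (count_pos_iff.mp (by omega))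
    have := (hmem x).mp (by simp [hx])
    omega
  subst hB1
  obtain ⟨C₁, C₂, rfl, h1C₁, h1C₂⟩ :=
    exists_eq_append_cons_of_count_eq_one (l := C) (c := 1) (by omega)
  have hD : ∀ y ∈ C₁ ++ C₂, 1 < y := fun y hy => by
    have := (hmem y).mp (by simp at hy ⊢; tauto)
    have : y ≠ 1 := by rintro rfl; simp_all
    omega
  have hDdec : (C₁ ++ C₂).Pairwise (· ≥ ·) :=
    (ha.sublist (by simp)).pairwise_ge_of_lt (P := [1]) (by simp) hD
  have hDeq : C₁ ++ C₂ = descPairs 2 (n - 1) := by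
    refine eq_descPairs_of_pairwise_ge hDdec fun i => ?_
    have hi := hp i
    by_cases hi1 : i = 1
    · subst hi1
      simp [count_eq_zero.mpr h1C₁, count_eq_zero.mpr h1C₂]
    · simp only [count_append, count_cons, count_nil, beq_iff_eq] at hi ⊢
      split_ifs at hi ⊢ <;> omega
  have hC₁ : C₁.Nodup := nodup_iff_sublist.mpr fun v hv => by
    refine ha.not_1221 1 v (hD v (mem_append_left _ (hv.subset (by simp)))) ?_
    exact (hv.append (sublist_append_left [1] C₂)).cons_cons 1
  refine ⟨rfl, ?_⟩
  rcases eq_nil_or_eq_singleton_of_descPairs_eq_append hDeq.symm hC₁ with rfl | ⟨k, hk, rfl, rfl⟩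
  · left
    simpa using hDeq
  · right
    refine ⟨by omega, ?_⟩
    rw [show n - 2 = k by omega, show 2 + k = n by omega]
    simp

end Classification

section Counting

variable {n : ℕ} {w : List ℕ}

theorem mem_admissibleWords_succ (hw : w ∈ admissibleWords (n + 1)) :
    (∃ w' ∈ admissibleWords n, w = (n + 1) :: (n + 1) :: w') ∨
      (∃ a ∈ Set.Icc 1 n, w = twoRuns (n + 1) a) ∨ w = wordU (n + 1) ∨ w = wordV (n + 1) ∨
      (2 ≤ n ∧ w = wordW (n + 1)) := by
  obtain ⟨A, B, C, rfl, hA, hB, hC⟩ :=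
    exists_eq_append_cons_append_cons_of_count_eq_two (show w.count (n + 1) = 2 by simp [hw.1 _])
  obtain ⟨⟨hp, ha⟩, h⟩ := (insert_max_mem_admissibleWords_iff hA hB hC).mp hw
  rcases eq_or_ne A [] with rfl | hA₀ <;> rcases eq_or_ne B [] with rfl | hB₀
  · exact Or.inl ⟨C, ⟨by simpa using hp, by simpa using ha⟩, by simp⟩
  · obtain ⟨rfl, rfl | ⟨hn, rfl⟩⟩ :=
      h.eq_of_nil_left (by simpa using hp) (by simpa using ha) hB₀
    · exact Or.inr (Or.inr (Or.inr (Or.inl (by simp [wordV]))))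
    · refine Or.inr (Or.inr (Or.inr (Or.inr ⟨hn, ?_⟩)))
      simp [wordW, show n + 1 - 3 = n - 2 by omega]
  · obtain ⟨a, ha₁, han, rfl, rfl⟩ :=
      h.eq_descPairs_of_nil_middle (by simpa using hp) (by simpa using ha) hA₀
    exact Or.inr (Or.inl ⟨a, ⟨ha₁, han⟩, (twoRuns_succ han).symm⟩)
  · obtain ⟨rfl, rfl, rfl⟩ := h.eq_of_ne_nil_of_ne_nil hp ha hA₀ hB₀
    exact Or.inr (Or.inr (Or.inl (by simp [wordU])))

def exceptionalWords (n : ℕ) : Set (List ℕ) :=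
  twoRuns n '' Set.Icc 1 (n - 1) ∪ {wordU n, wordV n, wordW n}

theorem admissibleWords_succ (hn : 2 ≤ n) :
    admissibleWords (n + 1) =
      (fun w => (n + 1) :: (n + 1) :: w) '' admissibleWords n ∪ exceptionalWords (n + 1) := by
  ext w
  constructor
  · intro hw
    rcases mem_admissibleWords_succ hw with ⟨w', hw', rfl⟩ | ⟨a, ha, rfl⟩ | rfl | rfl | ⟨-, rfl⟩
    · exact Or.inl ⟨w', hw', rfl⟩
    · exact Or.inr (Or.inl ⟨a, by simpa using ha, rfl⟩)
    all_goals simp [exceptionalWords]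
  · rintro (⟨w', hw', rfl⟩ | ⟨a, ha, rfl⟩ | hw)
    · exact cons_cons_mem_admissibleWords hw'
    · exact twoRuns_mem_admissibleWords (by simp at ha; omega)
    · simp only [Set.mem_insert_iff, Set.mem_singleton_iff] at hw
      rcases hw with rfl | rfl | rfl
      · exact wordU_mem_admissibleWords (by omega)
      · exact wordV_mem_admissibleWords (by omega)
      · exact wordW_mem_admissibleWords hn

theorem admissibleWords_one : admissibleWords 1 = {[1, 1]} := by
  ext w
  refine ⟨fun ⟨hp, _⟩ => ?_, fun hw => ?_⟩
  · have h1 := hp 1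
    have h1' : ∀ x ∈ w, x = 1 := fun x hx => by have := hp.mem_iff.mp hx; omega
    rw [eq_replicate_of_mem h1'] at h1 ⊢
    simp_all
  · rw [Set.mem_singleton_iff.mp hw]
    exact descPairs_mem_admissibleWords (n := 1)

theorem admissibleWords_two :
    admissibleWords 2 = {[2, 2, 1, 1], [1, 1, 2, 2], [1, 2, 1, 2], [2, 1, 2, 1]} := by
  ext w
  constructor
  · intro hw
    rcases mem_admissibleWords_succ (n := 1) hw with
      ⟨w', hw', rfl⟩ | ⟨a, ha, rfl⟩ | rfl | rfl | ⟨h, -⟩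
    · rw [admissibleWords_one, Set.mem_singleton_iff] at hw'
      simp [hw']
    · obtain rfl : a = 1 := by simp at ha; omega
      simp [twoRuns, descPairs]
    · simp [wordU]
    · simp [wordV]
    · omega
  · simp only [Set.mem_insert_iff, Set.mem_singleton_iff]
    rintro (rfl | rfl | rfl | rfl)
    · exact cons_cons_mem_admissibleWords (n := 1) (by simp [admissibleWords_one])
    · exact twoRuns_mem_admissibleWords (n := 2) (a := 1) (by norm_num)
    · exact wordU_mem_admissibleWords (n := 1) le_rfl
    · exact wordV_mem_admissibleWords (n := 1) le_rfl

theorem encard_exceptionalWords (hn : 2 ≤ n) : (exceptionalWords (n + 1)).encard = n + 3 := by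
  have hinj : Set.InjOn (twoRuns (n + 1)) (Set.Icc 1 n) := fun a ha a' ha' h => by
    simp only [Set.mem_Icc] at ha ha'
    rw [twoRuns_eq_cons ha.1, twoRuns_eq_cons ha'.1] at h
    exact (cons.inj h).1
  have hdisj : Disjoint (twoRuns (n + 1) '' Set.Icc 1 n)
      {wordU (n + 1), wordV (n + 1), wordW (n + 1)} := by
    rw [Set.disjoint_left]
    rintro _ ⟨a, ha, rfl⟩ hw
    simp only [Set.mem_Icc] at ha
    simp [twoRuns_eq_cons ha.1, wordU, wordV, wordW] at hw
    omega
  rw [exceptionalWords, Nat.add_sub_cancel, Set.encard_union_eq hdisj, hinj.encard_image,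
    ← Finset.coe_Icc, Set.encard_coe_eq_coe_finsetCard, Nat.card_Icc,
    Set.encard_insert_of_notMem (by simp [wordU, wordV, wordW]; omega),
    Set.encard_insert_of_notMem (by simp [wordV, wordW]; omega), Set.encard_singleton]
  norm_num

theorem encard_admissibleWords_succ (hn : 2 ≤ n) :
    (admissibleWords (n + 1)).encard = (admissibleWords n).encard + (n + 3) := by
  have hdisj : Disjoint ((fun w => (n + 1) :: (n + 1) :: w) '' admissibleWords n)
      (exceptionalWords (n + 1)) := by
    rw [Set.disjoint_left]
    rintro _ ⟨w, -, rfl⟩ (⟨a, ha, h⟩ | h)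
    · simp only [Set.mem_Icc, Nat.add_sub_cancel] at ha
      rw [twoRuns_eq_cons ha.1] at h
      simp at h
      omega
    · simp [wordU, wordV, wordW] at h
      omega
  have hinj : Function.Injective fun w : List ℕ => (n + 1) :: (n + 1) :: w :=
    fun _ _ h => by simpa using h
  rw [admissibleWords_succ hn, Set.encard_union_eq hdisj, hinj.encard_image,
    encard_exceptionalWords hn]

theorem encard_admissibleWords (hn : 2 ≤ n) :
    (admissibleWords n).encard = ((n ^ 2 + 5 * n - 6) / 2 : ℕ) := by
  induction n, hn using Nat.le_induction with
  | base =>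
    rw [admissibleWords_two, Set.encard_insert_of_notMem (by simp),
      Set.encard_insert_of_notMem (by simp), Set.encard_insert_of_notMem (by simp),
      Set.encard_singleton]
    rfl
  | succ n hn ih =>
    rw [encard_admissibleWords_succ hn, ih]
    have : (n + 1) ^ 2 + 5 * (n + 1) - 6 = (n ^ 2 + 5 * n - 6) + 2 * (n + 3) := by
      ring_nf; omega
    rw [this, Nat.add_mul_div_left _ _ two_pos]
    push_cast
    rfl

end Counting

theorem nonnesting_avoid_123_231 (n : ℕ) (hn : 2 ≤ n) :
    {w : List ℕ | IsNonnesting n w ∧ Avoids w [1,2,3] ∧ Avoids w [2,3,1]}.ncard =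
      (n ^ 2 + 5 * n - 6) / 2 := by
  have hset : {w : List ℕ | IsNonnesting n w ∧ Avoids w [1,2,3] ∧ Avoids w [2,3,1]} =
      admissibleWords n := by
    ext w
    simp only [IsNonnesting, admissibleWords, admissible_iff_avoids, Set.mem_ofPred_eq]
    tauto
  rw [hset, Set.ncard_def, encard_admissibleWords hn, ENat.toNat_natCast]
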